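/- arXiv:2205.11719 — 3 statements merged into one kernel-verified Lean document; each statement's English description precedes it below -/
import Mathlib

section
/- Let c be a point of ℝ³ (the camera position) and X ⊆ ℝ³ an object model, with occlusion region O(X) = {x : ∃ α ∈ (0,1), α·(x − c) + c ∈ X}. If X is convex, then O(X) is convex; that is, the shadow of a convex object from a point camera is convex. -/
/-!
Translating the camera to the origin, the occluded region is the cone `Ioi 1 • K` over the
translated object `K`: a point is hidden behind `k ∈ K` exactly when it is `t • k` with `t > 1`.
A combination `a • (s • x) + b • (t • y)` of two such points equals `(a * s + b * t) • z` for a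
point `z` of the segment `[x, y]`, so the cone over a convex set with a convex set of nonnegative
scalars is convex.
-/

open Set Pointwise

variable {𝕜 E : Type*} [Field 𝕜] [LinearOrder 𝕜] [IsStrictOrderedRing 𝕜] [AddCommGroup E]
  [Module 𝕜 E]

theorem Convex.set_smul {I : Set 𝕜} {K : Set E} (hI : Convex 𝕜 I) (hI₀ : I ⊆ Ici 0)
    (hK : Convex 𝕜 K) : Convex 𝕜 (I • K) := by
  rintro _ ⟨s, hs, x, hx, rfl⟩ _ ⟨t, ht, y, hy, rfl⟩ a b ha hb hab
  obtain ⟨z, hz, hz_eq⟩ := hK.exists_mem_add_smul_eq hx hy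
    (mul_nonneg ha (hI₀ hs)) (mul_nonneg hb (hI₀ ht))
  refine ⟨a * s + b * t, ?_, z, hz, ?_⟩
  · simpa only [smul_eq_mul] using hI hs ht ha hb hab
  · simp only [hz_eq, mul_smul]

variable (𝕜) in
def occlusion (c : E) (X : Set E) : Set E :=
  {x | ∃ α ∈ Ioo (0 : 𝕜) 1, α • (x - c) + c ∈ X}

theorem occlusion_eq_preimage_smul (c : E) (X : Set E) :
    occlusion 𝕜 c X = (· - c) ⁻¹' (Ioi (1 : 𝕜) • ((· + c) ⁻¹' X)) := by
  ext x
  simp only [occlusion, mem_ofPred_eq, mem_preimage, mem_smul, mem_Ioo, mem_Ioi]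
  constructor
  · rintro ⟨α, ⟨hα₀, hα₁⟩, hx⟩
    exact ⟨α⁻¹, one_lt_inv₀ hα₀ |>.2 hα₁, α • (x - c), hx, inv_smul_smul₀ hα₀.ne' _⟩
  · rintro ⟨t, ht, y, hy, hxy⟩
    have ht₀ : 0 < t := zero_lt_one.trans ht
    refine ⟨t⁻¹, ⟨inv_pos.2 ht₀, inv_lt_one_of_one_lt₀ ht⟩, ?_⟩
    rwa [← hxy, inv_smul_smul₀ ht₀.ne']

theorem Convex.occlusion (c : E) {X : Set E} (hX : Convex 𝕜 X) :
    Convex 𝕜 (occlusion 𝕜 c X) := by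
  rw [occlusion_eq_preimage_smul]
  have hcone := (convex_Ioi (1 : 𝕜)).set_smul (fun _ ht ↦ le_of_lt (zero_lt_one.trans ht))
    (hX.translate_preimage_left c)
  simpa only [sub_eq_add_neg] using hcone.translate_preimage_left (-c)

/-- The shadow of a convex object from a point camera is convex. -/
theorem occlusion_convex
    (c : EuclideanSpace ℝ (Fin 3)) (X : Set (EuclideanSpace ℝ (Fin 3))) (hX : Convex ℝ X) :
    Convex ℝ {x : EuclideanSpace ℝ (Fin 3) | ∃ α ∈ Set.Ioo (0 : ℝ) 1, α • (x - c) + c ∈ X} :=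
  hX.occlusion c
end

section
/- Let c ∈ ℝ³ be the camera position and (X_k)_{k ∈ ι} a finite family of compact object models in ℝ³. For each i, let O_i = {x : ∃ α ∈ (0,1), α·(x − c) + c ∈ X_i} and Õ_i = {x : ∃ α ∈ (0,1], α·(x − c) + c ∈ X_i ∧ ∀ β ∈ (α,1), ∀ k ≠ i, β·(x − c) + c ∉ X_k}. Then every occluded point outside the objects is directly occluded by some object: (⋃_i O_i) \ (⋃_k X_k) ⊆ ⋃_i Õ_i. -/
/-! The parameters in `[α₀, 1]` at which the camera ray through `x` meets the union of the
objects form a compact set, since a finite union of compact sets is closed. The object met at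
the largest such parameter directly occludes `x`. -/

open Set

theorem exists_last_mem_of_isClosed {X : Type*} [TopologicalSpace X] {g : ℝ → X} {a b : ℝ}
    (hg : ContinuousOn g (Icc a b)) {S : Set X} (hS : IsClosed S) (hab : a ≤ b) (ha : g a ∈ S) :
    ∃ α ∈ Icc a b, g α ∈ S ∧ ∀ β ∈ Ioc α b, g β ∉ S := by
  set A := Icc a b ∩ g ⁻¹' S
  have hA : IsCompact A := isCompact_Icc.of_isClosed_subset
    (hg.preimage_isClosed_of_isClosed isClosed_Icc hS) inter_subset_left
  obtain ⟨hαI, hαS⟩ : sSup A ∈ A := hA.sSup_mem ⟨a, ⟨le_rfl, hab⟩, ha⟩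
  refine ⟨sSup A, hαI, hαS, fun β hβ hβS => ?_⟩
  have hβA : β ∈ A := ⟨⟨hαI.1.trans hβ.1.le, hβ.2⟩, hβS⟩
  exact hβ.1.not_ge (le_csSup hA.bddAbove hβA)

/-- For a finite family of compact objects, every occluded point outside the objects is
directly occluded by some object. -/
theorem occluded_point_is_directly_occluded
    {ι : Type*} [Finite ι] (c : EuclideanSpace ℝ (Fin 3))
    (X : ι → Set (EuclideanSpace ℝ (Fin 3))) (hX : ∀ k, IsCompact (X k)) :
    (⋃ i, {x : EuclideanSpace ℝ (Fin 3) | ∃ α ∈ Set.Ioo (0 : ℝ) 1,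
        α • (x - c) + c ∈ X i}) \ (⋃ k, X k) ⊆
      ⋃ i, {x : EuclideanSpace ℝ (Fin 3) | ∃ α ∈ Set.Ioc (0 : ℝ) 1,
        α • (x - c) + c ∈ X i ∧
        ∀ β ∈ Set.Ioo α 1, ∀ k ≠ i, β • (x - c) + c ∉ X k} := by
  rintro x ⟨hocc, -⟩
  obtain ⟨i₀, α₀, hα₀, hx₀⟩ := mem_iUnion.1 hocc
  have hray : Continuous fun β : ℝ => β • (x - c) + c := by fun_prop
  obtain ⟨α, ⟨hα₀α, hα1⟩, hα, hlast⟩ := exists_last_mem_of_isClosed hray.continuousOn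
    (isClosed_iUnion_of_finite fun k => (hX k).isClosed) hα₀.2.le (mem_iUnion.2 ⟨i₀, hx₀⟩)
  obtain ⟨i, hi⟩ := mem_iUnion.1 hα
  exact mem_iUnion.2 ⟨i, α, ⟨hα₀.1.trans_le hα₀α, hα1⟩, hi,
    fun β hβ k _ hk => hlast β ⟨hβ.1, hβ.2.le⟩ (mem_iUnion.2 ⟨k, hk⟩)⟩
end

section
/- Let c ∈ ℝ³ be the camera position and (X_k)_{k ∈ ι} a family of pairwise disjoint object models in ℝ³. For each i, let Õ_i = {x : ∃ α ∈ (0,1], α·(x − c) + c ∈ X_i ∧ ∀ β ∈ (α,1), ∀ k ≠ i, β·(x − c) + c ∉ X_k} be the direct occlusion space of object i. Then for any point x ∉ ⋃_k X_k and any indices i ≠ j, x cannot lie in both Õ_i and Õ_j; that is, outside the objects themselves, the direct occlusion spaces of distinct objects are pairwise disjoint. -/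
/-!
Suppose `x` lies outside every object but in the direct occlusion spaces of `i ≠ j`, with ray
parameters `α` and `β`. If `α = β`, one point lies in both `X i` and `X j`. If, say, `α < β`, then
`β = 1` because the ray beyond `X i` meets no other object strictly before `x`; but the ray point
at parameter `1` is `x` itself, which would then lie in `X j`.
-/

open Set

section

variable {R E ι : Type*} [Semiring R] [LinearOrder R] [AddCommGroup E] [Module R E]

def directOcclusionSpace (c : E) (X : ι → Set E) (i : ι) : Set E :=
  {y | ∃ α ∈ Ioc (0 : R) 1, α • (y - c) + c ∈ X i ∧
    ∀ β ∈ Ioo α 1, ∀ k ≠ i, β • (y - c) + c ∉ X k}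

lemma mem_of_ray_mem_of_unoccluded_after {c x : E} {X : ι → Set E} {i k : ι} {α β : R}
    (hunocc : ∀ γ ∈ Ioo α 1, ∀ k ≠ i, γ • (x - c) + c ∉ X k)
    (hαβ : α < β) (hβ : β ≤ 1) (hki : k ≠ i) (hβX : β • (x - c) + c ∈ X k) : x ∈ X k := by
  obtain hβ | rfl := hβ.lt_or_eq
  · exact absurd hβX (hunocc β ⟨hαβ, hβ⟩ k hki)
  · simpa using hβX

lemma directOcclusionSpace_inter_subset_iUnion {c : E} {X : ι → Set E}
    (hdisj : Pairwise fun i j => Disjoint (X i) (X j)) {i j : ι} (hij : i ≠ j) :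
    directOcclusionSpace (R := R) c X i ∩ directOcclusionSpace (R := R) c X j ⊆ ⋃ k, X k := by
  rintro x ⟨⟨α, hα, hαX, hunocc_i⟩, ⟨β, hβ, hβX, hunocc_j⟩⟩
  rcases lt_trichotomy α β with hαβ | rfl | hβα
  · exact mem_iUnion_of_mem j
      (mem_of_ray_mem_of_unoccluded_after hunocc_i hαβ hβ.2 hij.symm hβX)
  · exact absurd hβX (disjoint_left.mp (hdisj hij) hαX)
  · exact mem_iUnion_of_mem i
      (mem_of_ray_mem_of_unoccluded_after hunocc_j hβα hα.2 hij hαX)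

end

/-- Outside the objects themselves, the direct occlusion spaces of distinct (pairwise
disjoint) objects are pairwise disjoint. -/
theorem direct_occlusion_pairwise_disjoint
    {ι : Type*} (c : EuclideanSpace ℝ (Fin 3)) (X : ι → Set (EuclideanSpace ℝ (Fin 3)))
    (hdisj : Pairwise fun i j => Disjoint (X i) (X j))
    (x : EuclideanSpace ℝ (Fin 3)) (hx : x ∉ ⋃ k, X k) (i j : ι) (hij : i ≠ j) :
    ¬(x ∈ {y : EuclideanSpace ℝ (Fin 3) | ∃ α ∈ Set.Ioc (0 : ℝ) 1,
          α • (y - c) + c ∈ X i ∧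
          ∀ β ∈ Set.Ioo α 1, ∀ k ≠ i, β • (y - c) + c ∉ X k} ∧
      x ∈ {y : EuclideanSpace ℝ (Fin 3) | ∃ α ∈ Set.Ioc (0 : ℝ) 1,
          α • (y - c) + c ∈ X j ∧
          ∀ β ∈ Set.Ioo α 1, ∀ k ≠ j, β • (y - c) + c ∉ X k}) :=
  fun hxij => hx (directOcclusionSpace_inter_subset_iUnion (R := ℝ) hdisj hij hxij)
end
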